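/- arXiv:2501.13218 — 2 statements merged into one kernel-verified Lean document; each statement's English description precedes it below -/
import Mathlib

section
/- Let δ_L < δ_U be real numbers, let Λ > 0 and z ∈ ℝ, and set δ = δ_L (the lower boundary). Define τ : (0,∞) → ℝ by τ(c) = Φ(√(c/Λ)·(δ_U − δ_L) − z) − Φ(−z). Then τ(c) converges to 1 − Φ(−z) = Φ(z) as c → ∞, and the derivative of the map c ↦ logit(τ(c)) converges to 0 as c → ∞. -/
open Filter Set

/-- The standard normal cumulative distribution function. -/
noncomputable def Phi (x : ℝ) : ℝ :=
  (2 * Real.pi) ^ (-(1 : ℝ) / 2) * ∫ t in Set.Iic x, Real.exp (-t ^ 2 / 2)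

/-- The logit function, `logit x = log x - log (1 - x)`. -/
noncomputable def logit (x : ℝ) : ℝ := Real.log x - Real.log (1 - x)

section Aux

lemma gauss_cont : Continuous fun t : ℝ => Real.exp (-t ^ 2 / 2) := by
  continuity

lemma gauss_integrable : MeasureTheory.Integrable (fun t : ℝ => Real.exp (-t ^ 2 / 2)) := by
  have h : (fun t : ℝ => Real.exp (-t ^ 2 / 2)) = fun t : ℝ => Real.exp (-(1/2 : ℝ) * t ^ 2) := by
    funext t; ring_nf
  rw [h]
  exact integrable_exp_neg_mul_sq (by norm_num)

lemma gauss_total : ∫ t : ℝ, Real.exp (-t ^ 2 / 2) = Real.sqrt (2 * Real.pi) := by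
  have h : (fun t : ℝ => Real.exp (-t ^ 2 / 2)) = fun t : ℝ => Real.exp (-(1/2 : ℝ) * t ^ 2) := by
    funext t; ring_nf
  rw [h, integral_gaussian]
  rw [show Real.pi / (1/2 : ℝ) = 2 * Real.pi by ring]

lemma C_pos : 0 < (2 * Real.pi) ^ (-(1 : ℝ) / 2) :=
  Real.rpow_pos_of_pos (by positivity) _

lemma C_mul_total : (2 * Real.pi) ^ (-(1 : ℝ) / 2) * Real.sqrt (2 * Real.pi) = 1 := by
  rw [Real.sqrt_eq_rpow, ← Real.rpow_add (by positivity)]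
  norm_num

lemma hasDerivAt_G (x : ℝ) :
    HasDerivAt (fun u : ℝ => ∫ t in Iic u, Real.exp (-t ^ 2 / 2)) (Real.exp (-x ^ 2 / 2)) x := by
  have hfi := gauss_integrable
  have key : (fun u : ℝ => ∫ t in Iic u, Real.exp (-t ^ 2 / 2))
      = fun u : ℝ => (∫ t in Iic (0:ℝ), Real.exp (-t ^ 2 / 2))
          + ∫ t in (0:ℝ)..u, Real.exp (-t ^ 2 / 2) := by
    funext u
    rw [← intervalIntegral.integral_Iic_sub_Iic hfi.integrableOn hfi.integrableOn]
    ring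
  rw [key]
  exact (intervalIntegral.integral_hasDerivAt_right (hfi.intervalIntegrable)
    (gauss_cont.stronglyMeasurable.stronglyMeasurableAtFilter)
    gauss_cont.continuousAt).const_add _

lemma hasDerivAt_Phi (x : ℝ) :
    HasDerivAt Phi ((2 * Real.pi) ^ (-(1 : ℝ) / 2) * Real.exp (-x ^ 2 / 2)) x :=
  (hasDerivAt_G x).const_mul _

lemma Phi_strictMono : StrictMono Phi := by
  apply strictMono_of_deriv_pos
  intro x
  rw [(hasDerivAt_Phi x).deriv]
  positivity

lemma tendsto_Phi_atTop : Tendsto Phi atTop (nhds 1) := by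
  have hG : Tendsto (fun u : ℝ => ∫ t in Iic u, Real.exp (-t ^ 2 / 2)) atTop
      (nhds (∫ t : ℝ, Real.exp (-t ^ 2 / 2))) :=
    (MeasureTheory.aecover_Iic tendsto_id).integral_tendsto_of_countably_generated
      gauss_integrable
  have := hG.const_mul ((2 * Real.pi) ^ (-(1 : ℝ) / 2))
  rw [gauss_total, C_mul_total] at this
  exact this

lemma Phi_lt_one (x : ℝ) : Phi x < 1 := by
  have h1 : Phi x < Phi (x + 1) := Phi_strictMono (by linarith)
  have h2 : Phi (x + 1) ≤ 1 := by
    apply ge_of_tendsto tendsto_Phi_atTop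
    filter_upwards [eventually_ge_atTop (x + 1)] with y hy
    exact (Phi_strictMono.le_iff_le).mpr hy
  linarith

lemma Phi_pos (x : ℝ) : 0 < Phi x := by
  have h1 : Phi (x - 1) < Phi x := Phi_strictMono (by linarith)
  have h2 : 0 ≤ Phi (x - 1) := by
    apply mul_nonneg C_pos.le
    exact MeasureTheory.setIntegral_nonneg measurableSet_Iic
      (fun t _ => (Real.exp_pos _).le)
  linarith

lemma Phi_neg_eq (z : ℝ) : Phi (-z) = 1 - Phi z := by
  have heven : ∀ t : ℝ, Real.exp (-(-t) ^ 2 / 2) = Real.exp (-t ^ 2 / 2) := by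
    intro t; rw [neg_sq]
  have h1 : (∫ t in Iic (-z), Real.exp (-(-t) ^ 2 / 2)) = ∫ t in Ioi z, Real.exp (-t ^ 2 / 2) := by
    rw [integral_comp_neg_Iic (-z) (fun t => Real.exp (-t ^ 2 / 2)), neg_neg]
  simp only [neg_sq] at h1
  have h2 : (∫ t in Iic z, Real.exp (-t ^ 2 / 2)) + (∫ t in Ioi z, Real.exp (-t ^ 2 / 2))
      = Real.sqrt (2 * Real.pi) := by
    rw [intervalIntegral.integral_Iic_add_Ioi gauss_integrable.integrableOn
      gauss_integrable.integrableOn, gauss_total]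
  unfold Phi
  rw [h1]
  have := C_mul_total
  nlinarith [C_pos]

lemma tendsto_sqrt_atTop : Tendsto Real.sqrt atTop atTop := by
  apply tendsto_atTop_atTop.mpr
  intro b
  refine ⟨max (b ^ 2) 0, fun a ha => ?_⟩
  have h1 : Real.sqrt (b ^ 2) ≤ Real.sqrt a :=
    Real.sqrt_le_sqrt ((le_max_left _ _).trans ha)
  rw [Real.sqrt_sq_eq_abs] at h1
  exact (le_abs_self b).trans h1

end Aux

theorem limiting_behavior_boundary_lower
    (δL δU Λ z : ℝ) (hLU : δL < δU) (hΛ : 0 < Λ) :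
    Tendsto
      (fun c : ℝ => Phi (Real.sqrt (c / Λ) * (δU - δL) - z) - Phi (-z))
      atTop (nhds (1 - Phi (-z))) ∧
    (1 - Phi (-z) = Phi z) ∧
    Tendsto
      (deriv (fun c : ℝ => logit
        (Phi (Real.sqrt (c / Λ) * (δU - δL) - z) - Phi (-z))))
      atTop (nhds 0) := by
  set Δ : ℝ := δU - δL with hΔdef
  have hΔ : 0 < Δ := by simp [hΔdef]; linarith
  -- the inner argument tends to atTop
  have hdiv : Tendsto (fun c : ℝ => c / Λ) atTop atTop :=
    tendsto_id.atTop_div_const hΛ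
  have hsq : Tendsto (fun c : ℝ => Real.sqrt (c / Λ)) atTop atTop :=
    tendsto_sqrt_atTop.comp hdiv
  have hg : Tendsto (fun c : ℝ => Real.sqrt (c / Λ) * Δ - z) atTop atTop :=
    tendsto_atTop_add_const_right _ (-z) (hsq.atTop_mul_const hΔ) |>.congr (by intro c; ring_nf)
  -- part 1
  have hpart1 : Tendsto
      (fun c : ℝ => Phi (Real.sqrt (c / Λ) * Δ - z) - Phi (-z))
      atTop (nhds (1 - Phi (-z))) :=
    (tendsto_Phi_atTop.comp hg).sub_const _
  refine ⟨hpart1, by rw [Phi_neg_eq]; ring, ?_⟩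
  -- part 3
  set C : ℝ := (2 * Real.pi) ^ (-(1 : ℝ) / 2) with hC
  set F : ℝ → ℝ := fun c => Phi (Real.sqrt (c / Λ) * Δ - z) - Phi (-z) with hF
  set D : ℝ → ℝ := fun c =>
    (C * Real.exp (-(Real.sqrt (c / Λ) * Δ - z) ^ 2 / 2) *
      (1 / (2 * Real.sqrt (c / Λ)) * (1 / Λ) * Δ)) * (1 / F c + 1 / (1 - F c)) with hD
  have hΦz : 0 < Phi (-z) := Phi_pos _
  have hΦz1 : Phi (-z) < 1 := Phi_lt_one _
  -- eventual equality of deriv with D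
  have hevent : ∀ᶠ c in atTop, deriv (fun c : ℝ => logit (F c)) c = D c := by
    filter_upwards [eventually_gt_atTop 0] with c hc
    have hcΛ : 0 < c / Λ := div_pos hc hΛ
    have hsqpos : 0 < Real.sqrt (c / Λ) := Real.sqrt_pos.mpr hcΛ
    -- derivative of inner map
    have hginner : HasDerivAt (fun c : ℝ => Real.sqrt (c / Λ) * Δ - z)
        (1 / (2 * Real.sqrt (c / Λ)) * (1 / Λ) * Δ) c := by
      have h1 : HasDerivAt (fun c : ℝ => c / Λ) (1 / Λ) c := by
        simpa using (hasDerivAt_id c).div_const Λ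
      have h2 : HasDerivAt (fun c : ℝ => Real.sqrt (c / Λ))
          (1 / (2 * Real.sqrt (c / Λ)) * (1 / Λ)) c :=
        (Real.hasDerivAt_sqrt (ne_of_gt hcΛ)).comp c h1
      exact (h2.mul_const Δ).sub_const z
    have hFd : HasDerivAt F
        (C * Real.exp (-(Real.sqrt (c / Λ) * Δ - z) ^ 2 / 2) *
          (1 / (2 * Real.sqrt (c / Λ)) * (1 / Λ) * Δ)) c :=
      ((hasDerivAt_Phi _).comp c hginner).sub_const _
    set F' : ℝ := C * Real.exp (-(Real.sqrt (c / Λ) * Δ - z) ^ 2 / 2) *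
      (1 / (2 * Real.sqrt (c / Λ)) * (1 / Λ) * Δ) with hF'
    -- F c ∈ (0, 1)
    have hFpos : 0 < F c := by
      have : Phi (-z) < Phi (Real.sqrt (c / Λ) * Δ - z) := by
        apply Phi_strictMono
        nlinarith
      simp only [hF]; linarith
    have hFlt : F c < 1 := by
      have := Phi_lt_one (Real.sqrt (c / Λ) * Δ - z)
      simp only [hF]; linarith
    have hlog1 : HasDerivAt (fun c : ℝ => Real.log (F c)) (F' / F c) c :=
      hFd.log (ne_of_gt hFpos)
    have hlog2 : HasDerivAt (fun c : ℝ => Real.log (1 - F c)) (-F' / (1 - F c)) c := by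
      have hsub : HasDerivAt (fun c : ℝ => 1 - F c) (-F') c := by
        simpa using (hasDerivAt_const c (1:ℝ)).fun_sub hFd
      exact hsub.log (by linarith)
    have hlogit : HasDerivAt (fun c : ℝ => logit (F c)) (F' / F c - -F' / (1 - F c)) c := by
      simpa [logit] using hlog1.fun_sub hlog2
    rw [hlogit.deriv]
    have hDc : D c = F' * (1 / F c + 1 / (1 - F c)) := rfl
    rw [hDc]
    have hne1 : F c ≠ 0 := ne_of_gt hFpos
    have hne2 : (1 : ℝ) - F c ≠ 0 := by linarith
    field_simp
    ring
  -- D tends to 0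
  have hDlim : Tendsto D atTop (nhds 0) := by
    have hA : Tendsto (fun c : ℝ => C * Real.exp (-(Real.sqrt (c / Λ) * Δ - z) ^ 2 / 2) *
        (1 / (2 * Real.sqrt (c / Λ)) * (1 / Λ) * Δ)) atTop (nhds 0) := by
      have hexp : Tendsto (fun c : ℝ =>
          Real.exp (-(Real.sqrt (c / Λ) * Δ - z) ^ 2 / 2)) atTop (nhds 0) := by
        apply Real.tendsto_exp_atBot.comp
        have hsqtop : Tendsto (fun c : ℝ => (Real.sqrt (c / Λ) * Δ - z) ^ 2) atTop atTop :=
          (tendsto_pow_atTop (two_ne_zero)).comp hg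
        have : Tendsto (fun c : ℝ => -(Real.sqrt (c / Λ) * Δ - z) ^ 2) atTop atBot :=
          tendsto_neg_atTop_atBot.comp hsqtop
        exact this.atBot_div_const (by norm_num)
      have hinv : Tendsto (fun c : ℝ => 1 / (2 * Real.sqrt (c / Λ)) * (1 / Λ) * Δ)
          atTop (nhds 0) := by
        have : Tendsto (fun c : ℝ => 2 * Real.sqrt (c / Λ)) atTop atTop :=
          hsq.const_mul_atTop (by norm_num)
        simpa using ((this.inv_tendsto_atTop).mul_const (1 / Λ)).mul_const Δ
      have := (hexp.const_mul C).mul hinv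
      simpa using this
    have hB : Tendsto (fun c : ℝ => 1 / F c + 1 / (1 - F c)) atTop
        (nhds (1 / (1 - Phi (-z)) + 1 / (Phi (-z)))) := by
      have h1 : Tendsto (fun c : ℝ => 1 / F c) atTop (nhds (1 / (1 - Phi (-z)))) := by
        apply Tendsto.div tendsto_const_nhds hpart1 (by linarith)
      have h2 : Tendsto (fun c : ℝ => 1 / (1 - F c)) atTop (nhds (1 / (Phi (-z)))) := by
        have hsub : Tendsto (fun c : ℝ => 1 - F c) atTop (nhds (Phi (-z))) := by
          have := hpart1.const_sub 1
          simpa using this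
        exact Tendsto.div tendsto_const_nhds hsub (ne_of_gt hΦz)
      exact h1.add h2
    have := hA.mul hB
    rw [zero_mul] at this
    exact this
  exact hDlim.congr' (Filter.EventuallyEq.symm hevent)
end

section
/- Let δ_L < δ_U be real numbers, let δ ∈ ℝ with δ ≠ δ_L and δ ≠ δ_U, let Λ > 0 and z ∈ ℝ. Define τ : (0,∞) → ℝ by τ(c) = Φ(√(c/Λ)·(δ_U − δ) − z) − Φ(√(c/Λ)·(δ_L − δ) − z). Then logit(τ(c))/c converges, as c → ∞, to (1/2 − 𝟙{δ ∉ (δ_L, δ_U)})·min{(δ_U − δ)²/Λ, (δ_L − δ)²/Λ}, where 𝟙{δ ∉ (δ_L, δ_U)} equals 1 if δ lies outside the open interval (δ_L, δ_U) and 0 otherwise. -/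
open Filter Set

open MeasureTheory Topology

noncomputable def gpdf (t : ℝ) : ℝ := Real.exp (-t ^ 2 / 2)

noncomputable def Kg : ℝ := (2 * Real.pi) ^ (-(1 : ℝ) / 2)

lemma gpdf_pos (t : ℝ) : 0 < gpdf t := Real.exp_pos _
lemma gpdf_eq (t : ℝ) : gpdf t = Real.exp (-(1/2) * t ^ 2) := by unfold gpdf; ring_nf
lemma gpdf_integrable : Integrable gpdf := by
  have h := integrable_exp_neg_mul_sq (by norm_num : (0:ℝ) < 1/2)
  exact h.congr (Eventually.of_forall fun t => (gpdf_eq t).symm)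
lemma gpdf_even (t : ℝ) : gpdf (-t) = gpdf t := by unfold gpdf; ring_nf

lemma gpdf_integral : ∫ t : ℝ, gpdf t = Real.sqrt (2 * Real.pi) := by
  have h := integral_gaussian (1/2 : ℝ)
  simp_rw [← gpdf_eq] at h
  rw [h]; congr 1; ring

lemma mul_gpdf_integrable : Integrable (fun t => t * gpdf t) := by
  have h := integrable_mul_exp_neg_mul_sq (by norm_num : (0:ℝ) < 1/2)
  exact h.congr (Eventually.of_forall fun t => by simp [gpdf_eq])

lemma gpdf_tendsto : Tendsto gpdf atTop (𝓝 0) := by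
  apply Real.tendsto_exp_atBot.comp
  have h : Tendsto (fun t : ℝ => t ^ 2) atTop atTop := tendsto_pow_atTop two_ne_zero
  have h2 : Tendsto (fun t : ℝ => -t ^ 2) atTop atBot := tendsto_neg_atBot_iff.mpr h
  exact h2.atBot_div_const (by norm_num)

lemma integral_mul_gpdf_Ioi (x : ℝ) : ∫ t in Ioi x, t * gpdf t = gpdf x := by
  have hderiv : ∀ t ∈ Ici x, HasDerivAt (fun u => -gpdf u) (t * gpdf t) t := by
    intro t _
    have h1 : HasDerivAt (fun u : ℝ => -u ^ 2 / 2) (-t) t := by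
      have := ((hasDerivAt_pow 2 t).neg).div_const 2
      exact this.congr_deriv (by norm_num; ring)
    have h2 := (h1.exp).neg
    exact h2.congr_deriv (by unfold gpdf; ring)
  have htend : Tendsto (fun u => -gpdf u) atTop (𝓝 0) := by simpa using gpdf_tendsto.neg
  have := integral_Ioi_of_hasDerivAt_of_tendsto' hderiv mul_gpdf_integrable.integrableOn htend
  simpa using this

lemma tail_Ioi_le {x : ℝ} (hx : 1 ≤ x) : ∫ t in Ioi x, gpdf t ≤ gpdf x := by
  rw [← integral_mul_gpdf_Ioi x]
  apply setIntegral_mono_on gpdf_integrable.integrableOn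
    mul_gpdf_integrable.integrableOn measurableSet_Ioi
  intro t ht
  have h1 : 1 ≤ t := hx.trans ht.le
  nlinarith [gpdf_pos t]

lemma mid_right_le {x : ℝ} (hx : 0 ≤ x) : gpdf (x + 1) ≤ ∫ t in Ioc x (x + 1), gpdf t := by
  have h : ∫ _t in Ioc x (x + 1), gpdf (x + 1) ≤ ∫ t in Ioc x (x + 1), gpdf t := by
    apply setIntegral_mono_on (integrableOn_const (by simp))
      gpdf_integrable.integrableOn measurableSet_Ioc
    intro t ht
    unfold gpdf
    apply Real.exp_le_exp.mpr
    have := ht.1; have := ht.2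
    nlinarith
  calc gpdf (x+1) = ∫ _t in Ioc x (x+1), gpdf (x+1) := by
        rw [setIntegral_const]; simp [Real.volume_Ioc]
    _ ≤ _ := h

lemma mid_left_le {x : ℝ} (hx : x ≤ 0) : gpdf (x - 1) ≤ ∫ t in Ioc (x - 1) x, gpdf t := by
  have h : ∫ _t in Ioc (x - 1) x, gpdf (x - 1) ≤ ∫ t in Ioc (x - 1) x, gpdf t := by
    apply setIntegral_mono_on (integrableOn_const (by simp))
      gpdf_integrable.integrableOn measurableSet_Ioc
    intro t ht
    unfold gpdf
    apply Real.exp_le_exp.mpr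
    have := ht.1; have := ht.2
    nlinarith
  calc gpdf (x-1) = ∫ _t in Ioc (x-1) x, gpdf (x-1) := by
        rw [setIntegral_const]; simp [Real.volume_Ioc]
    _ ≤ _ := h

lemma Ioc_subset_integral_le {s t : Set ℝ} (h : s ⊆ t) (hs : MeasurableSet s) :
    ∫ u in s, gpdf u ≤ ∫ u in t, gpdf u :=
  setIntegral_mono_set gpdf_integrable.integrableOn
    (Eventually.of_forall fun u => (gpdf_pos u).le) (HasSubset.Subset.eventuallyLE h)

lemma tail_Ioi_ge {x : ℝ} (hx : 0 ≤ x) : gpdf (x + 1) ≤ ∫ t in Ioi x, gpdf t :=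
  (mid_right_le hx).trans (Ioc_subset_integral_le Ioc_subset_Ioi_self measurableSet_Ioc)

lemma tail_Ioi_pos (x : ℝ) : 0 < ∫ t in Ioi x, gpdf t :=
  lt_of_lt_of_le (lt_of_lt_of_le (gpdf_pos (|x| + 1)) (tail_Ioi_ge (abs_nonneg x)))
    (Ioc_subset_integral_le (Ioi_subset_Ioi (le_abs_self x)) measurableSet_Ioi)

lemma Iic_gpdf_eq (x : ℝ) : ∫ t in Iic x, gpdf t = ∫ t in Ioi (-x), gpdf t := by
  calc ∫ t in Iic x, gpdf t = ∫ t in Iic x, gpdf (-t) := by simp [gpdf_even]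
    _ = _ := integral_comp_neg_Iic x gpdf

lemma Iic_gpdf_pos (x : ℝ) : 0 < ∫ t in Iic x, gpdf t := by
  rw [Iic_gpdf_eq]; exact tail_Ioi_pos _

lemma tail_Iic_le {x : ℝ} (hx : x ≤ -1) : ∫ t in Iic x, gpdf t ≤ gpdf x := by
  rw [Iic_gpdf_eq, ← gpdf_even]
  exact tail_Ioi_le (by linarith)

lemma Iic_add_Ioi_gpdf (x : ℝ) :
    (∫ t in Iic x, gpdf t) + ∫ t in Ioi x, gpdf t = Real.sqrt (2 * Real.pi) := by
  rw [intervalIntegral.integral_Iic_add_Ioi gpdf_integrable.integrableOn gpdf_integrable.integrableOn,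
    gpdf_integral]

lemma Iic_add_Ioc_gpdf {a b : ℝ} (h : a ≤ b) :
    (∫ t in Iic a, gpdf t) + ∫ t in Ioc a b, gpdf t = ∫ t in Iic b, gpdf t := by
  rw [← setIntegral_union (Iic_disjoint_Ioc le_rfl) measurableSet_Ioc
    gpdf_integrable.integrableOn gpdf_integrable.integrableOn, Iic_union_Ioc_eq_Iic h]

lemma sq_atTop : Tendsto (fun s : ℝ => s ^ 2) atTop atTop := tendsto_pow_atTop two_ne_zero

lemma quad_tendsto (C r p : ℝ) (hC : 0 < C) :
    Tendsto (fun s : ℝ => Real.log (C * gpdf (r * s + p)) / s ^ 2) atTop (𝓝 (-r ^ 2 / 2)) := by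
  have hev : ∀ᶠ s in atTop, Real.log C / s ^ 2 - (r + p / s) ^ 2 / 2
      = Real.log (C * gpdf (r * s + p)) / s ^ 2 := by
    filter_upwards [eventually_gt_atTop 0] with s hs
    rw [Real.log_mul hC.ne' (gpdf_pos _).ne']
    unfold gpdf
    rw [Real.log_exp]
    field_simp
    ring
  have h1 : Tendsto (fun s : ℝ => Real.log C / s ^ 2) atTop (𝓝 0) :=
    tendsto_const_nhds.div_atTop sq_atTop
  have h2 : Tendsto (fun s : ℝ => (r + p / s) ^ 2 / 2) atTop (𝓝 (r ^ 2 / 2)) := by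
    have hp : Tendsto (fun s : ℝ => p / s) atTop (𝓝 0) :=
      Tendsto.div_atTop tendsto_const_nhds tendsto_id
    have h3 : Tendsto (fun s : ℝ => r + p / s) atTop (𝓝 r) := by
      simpa using (tendsto_const_nhds (x := r) (f := atTop)).add hp
    exact (h3.pow 2).div_const 2
  have := (h1.sub h2).congr' hev
  simpa [neg_div] using this

lemma log_squeeze {f m M : ℝ → ℝ} {l : ℝ}
    (hm : ∀ᶠ s in atTop, m s ≤ f s) (hM : ∀ᶠ s in atTop, f s ≤ M s)
    (hpos : ∀ᶠ s in atTop, 0 < m s)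
    (h1 : Tendsto (fun s => Real.log (m s) / s ^ 2) atTop (𝓝 l))
    (h2 : Tendsto (fun s => Real.log (M s) / s ^ 2) atTop (𝓝 l)) :
    Tendsto (fun s => Real.log (f s) / s ^ 2) atTop (𝓝 l) := by
  apply tendsto_of_tendsto_of_tendsto_of_le_of_le' h1 h2
  · filter_upwards [hm, hpos, eventually_gt_atTop 0] with s h h0 hs
    exact (div_le_div_iff_of_pos_right (by positivity)).mpr (Real.log_le_log h0 h)
  · filter_upwards [hm, hM, hpos, eventually_gt_atTop 0] with s h hMs h0 hs
    exact (div_le_div_iff_of_pos_right (by positivity)).mpr (Real.log_le_log (h0.trans_le h) hMs)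

lemma lin_atTop {a : ℝ} (ha : 0 < a) (z : ℝ) :
    Tendsto (fun s : ℝ => a * s - z) atTop atTop := by
  simpa [sub_eq_add_neg] using
    tendsto_atTop_add_const_right atTop (-z) (Tendsto.const_mul_atTop ha tendsto_id)

lemma tendsto_log_tailIoi {a : ℝ} (z C : ℝ) (ha : 0 < a) (hC : 0 < C) :
    Tendsto (fun s => Real.log (C * ∫ t in Ioi (a * s - z), gpdf t) / s ^ 2)
      atTop (𝓝 (-a ^ 2 / 2)) := by
  apply log_squeeze (m := fun s => C * gpdf (a * s + (1 - z)))
    (M := fun s => C * gpdf (a * s + -z))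
  · filter_upwards [(lin_atTop ha z).eventually_ge_atTop 1] with s hs
    have h := tail_Ioi_ge (x := a * s - z) (by linarith)
    have he : a * s - z + 1 = a * s + (1 - z) := by ring
    rw [he] at h
    exact mul_le_mul_of_nonneg_left h hC.le
  · filter_upwards [(lin_atTop ha z).eventually_ge_atTop 1] with s hs
    have h := tail_Ioi_le (x := a * s - z) hs
    have he : a * s - z = a * s + -z := by ring
    rw [he] at h
    exact mul_le_mul_of_nonneg_left h hC.le
  · filter_upwards with s; exact mul_pos hC (gpdf_pos _)
  · exact quad_tendsto C a (1 - z) hC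
  · exact quad_tendsto C a (-z) hC

lemma tendsto_log_tailIic {a : ℝ} (z C : ℝ) (ha : a < 0) (hC : 0 < C) :
    Tendsto (fun s => Real.log (C * ∫ t in Iic (a * s - z), gpdf t) / s ^ 2)
      atTop (𝓝 (-a ^ 2 / 2)) := by
  simp_rw [Iic_gpdf_eq, show ∀ s : ℝ, -(a * s - z) = (-a) * s - (-z) from fun s => by ring]
  simpa using tendsto_log_tailIoi (-z) C (neg_pos.mpr ha) hC

lemma tendsto_tailIoi_zero {a : ℝ} (z : ℝ) (ha : 0 < a) :
    Tendsto (fun s => ∫ t in Ioi (a * s - z), gpdf t) atTop (𝓝 0) := by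
  apply tendsto_of_tendsto_of_tendsto_of_le_of_le' tendsto_const_nhds
    (gpdf_tendsto.comp (lin_atTop ha z))
  · filter_upwards with s; exact (tail_Ioi_pos _).le
  · filter_upwards [(lin_atTop ha z).eventually_ge_atTop 1] with s hs
    exact tail_Ioi_le hs

lemma tendsto_tailIic_zero {a : ℝ} (z : ℝ) (ha : a < 0) :
    Tendsto (fun s => ∫ t in Iic (a * s - z), gpdf t) atTop (𝓝 0) := by
  simp_rw [Iic_gpdf_eq, show ∀ s : ℝ, -(a * s - z) = (-a) * s - (-z) from fun s => by ring]
  exact tendsto_tailIoi_zero (-z) (neg_pos.mpr ha)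

lemma tendsto_log_mid_pos {a b : ℝ} (z C : ℝ) (hb : 0 < b) (hba : b < a) (hC : 0 < C) :
    Tendsto (fun s => Real.log (C * ∫ t in Ioc (b * s - z) (a * s - z), gpdf t) / s ^ 2)
      atTop (𝓝 (-b ^ 2 / 2)) := by
  apply log_squeeze (m := fun s => C * gpdf (b * s + (1 - z)))
    (M := fun s => C * gpdf (b * s + -z))
  · filter_upwards [(lin_atTop hb z).eventually_ge_atTop 1,
      (lin_atTop (sub_pos.mpr hba) 0).eventually_ge_atTop 1] with s h1 h2
    have hL : (0:ℝ) ≤ b * s - z := by linarith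
    have h3 : b * s - z + 1 ≤ a * s - z := by nlinarith
    have hgm := (mid_right_le hL).trans
      (Ioc_subset_integral_le (Ioc_subset_Ioc_right h3) measurableSet_Ioc)
    rw [show b * s - z + 1 = b * s + (1 - z) by ring] at hgm
    exact mul_le_mul_of_nonneg_left hgm hC.le
  · filter_upwards [(lin_atTop hb z).eventually_ge_atTop 1] with s h1
    have h : ∫ t in Ioc (b * s - z) (a * s - z), gpdf t ≤ gpdf (b * s - z) :=
      (Ioc_subset_integral_le Ioc_subset_Ioi_self measurableSet_Ioc).trans (tail_Ioi_le h1)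
    have he : gpdf (b * s - z) = gpdf (b * s + -z) := by rw [sub_eq_add_neg]
    rw [he] at h
    exact mul_le_mul_of_nonneg_left h hC.le
  · filter_upwards with s; exact mul_pos hC (gpdf_pos _)
  · exact quad_tendsto C b (1 - z) hC
  · exact quad_tendsto C b (-z) hC

lemma tendsto_log_mid_neg {a b : ℝ} (z C : ℝ) (ha : a < 0) (hba : b < a) (hC : 0 < C) :
    Tendsto (fun s => Real.log (C * ∫ t in Ioc (b * s - z) (a * s - z), gpdf t) / s ^ 2)
      atTop (𝓝 (-a ^ 2 / 2)) := by
  apply log_squeeze (m := fun s => C * gpdf (a * s + (-1 - z)))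
    (M := fun s => C * gpdf (a * s + -z))
  · filter_upwards [(lin_atTop (neg_pos.mpr ha) (-z)).eventually_ge_atTop 1,
      (lin_atTop (sub_pos.mpr hba) 0).eventually_ge_atTop 1] with s h1 h2
    have hU : a * s - z ≤ 0 := by nlinarith
    have h3 : b * s - z ≤ a * s - z - 1 := by nlinarith
    have hgm := (mid_left_le hU).trans
      (Ioc_subset_integral_le (Ioc_subset_Ioc_left h3) measurableSet_Ioc)
    rw [show a * s - z - 1 = a * s + (-1 - z) by ring] at hgm
    exact mul_le_mul_of_nonneg_left hgm hC.le
  · filter_upwards [(lin_atTop (neg_pos.mpr ha) (-z)).eventually_ge_atTop 1] with s h1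
    have hU1 : a * s - z ≤ -1 := by nlinarith
    have h : ∫ t in Ioc (b * s - z) (a * s - z), gpdf t ≤ gpdf (a * s - z) :=
      (Ioc_subset_integral_le Ioc_subset_Iic_self measurableSet_Ioc).trans (tail_Iic_le hU1)
    have he : gpdf (a * s - z) = gpdf (a * s + -z) := by rw [sub_eq_add_neg]
    rw [he] at h
    exact mul_le_mul_of_nonneg_left h hC.le
  · filter_upwards with s; exact mul_pos hC (gpdf_pos _)
  · exact quad_tendsto C a (-1 - z) hC
  · exact quad_tendsto C a (-z) hC

lemma log_max_pos {u v : ℝ} (hu : 0 < u) (hv : 0 < v) :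
    Real.log (max u v) = max (Real.log u) (Real.log v) := by
  rcases le_total u v with h | h
  · rw [max_eq_right h, max_eq_right (Real.log_le_log hu h)]
  · rw [max_eq_left h, max_eq_left (Real.log_le_log hv h)]

lemma tendsto_log_two_tails {a b : ℝ} (z C : ℝ) (ha : 0 < a) (hb : b < 0) (hC : 0 < C) :
    Tendsto (fun s => Real.log (C * ((∫ t in Iic (b * s - z), gpdf t)
        + ∫ t in Ioi (a * s - z), gpdf t)) / s ^ 2)
      atTop (𝓝 (-(min (a ^ 2) (b ^ 2)) / 2)) := by
  set X := fun s : ℝ => ∫ t in Iic (b * s - z), gpdf t with hX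
  set Y := fun s : ℝ => ∫ t in Ioi (a * s - z), gpdf t with hY
  have hXpos : ∀ s, 0 < X s := fun s => Iic_gpdf_pos _
  have hYpos : ∀ s, 0 < Y s := fun s => tail_Ioi_pos _
  have hmaxlim : Tendsto (fun s => Real.log (C * max (X s) (Y s)) / s ^ 2)
      atTop (𝓝 (-(min (a ^ 2) (b ^ 2)) / 2)) := by
    have h1 := tendsto_log_tailIic z C hb hC
    have h2 := tendsto_log_tailIoi z C ha hC
    have hmax := h1.max h2
    have hval : max (-b ^ 2 / 2) (-a ^ 2 / 2) = -(min (a ^ 2) (b ^ 2)) / 2 := by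
      rcases le_total (a ^ 2) (b ^ 2) with h | h
      · rw [min_eq_left h, max_eq_right (by linarith)]
      · rw [min_eq_right h, max_eq_left (by linarith)]
    rw [hval] at hmax
    apply hmax.congr'
    filter_upwards [eventually_gt_atTop 0] with s hs
    have : C * max (X s) (Y s) = max (C * X s) (C * Y s) :=
      (mul_max_of_nonneg _ _ hC.le)
    rw [this, log_max_pos (mul_pos hC (hXpos s)) (mul_pos hC (hYpos s)),
      max_div_div_right (by positivity : (0:ℝ) ≤ s ^ 2)]
  apply log_squeeze (m := fun s => C * max (X s) (Y s))
    (M := fun s => 2 * (C * max (X s) (Y s)))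
  · filter_upwards with s
    have := (hXpos s).le; have := (hYpos s).le
    rcases le_total (X s) (Y s) with h | h
    · rw [max_eq_right h]; nlinarith
    · rw [max_eq_left h]; nlinarith
  · filter_upwards with s
    rcases le_total (X s) (Y s) with h | h
    · rw [max_eq_right h]; nlinarith [(hXpos s).le, hC.le]
    · rw [max_eq_left h]; nlinarith [(hYpos s).le, hC.le]
  · filter_upwards with s
    exact mul_pos hC (lt_max_of_lt_left (hXpos s))
  · exact hmaxlim
  · have hlog2 : Tendsto (fun s : ℝ => Real.log 2 / s ^ 2) atTop (𝓝 0) :=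
      tendsto_const_nhds.div_atTop sq_atTop
    have := hlog2.add hmaxlim
    rw [zero_add] at this
    apply this.congr'
    filter_upwards with s
    rw [← add_div, ← Real.log_mul (by norm_num)
      (mul_pos hC (lt_max_of_lt_left (hXpos s))).ne']

lemma Kg_pos : 0 < Kg := Real.rpow_pos_of_pos (by positivity) _

lemma Kg_total : Kg * Real.sqrt (2 * Real.pi) = 1 := by
  unfold Kg
  rw [Real.sqrt_eq_rpow, show -(1:ℝ)/2 = -(1/2) by norm_num,
    Real.rpow_neg (by positivity)]
  exact inv_mul_cancel₀ (by positivity)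

lemma Phi_eq (x : ℝ) : Phi x = Kg * ∫ t in Iic x, gpdf t := rfl

lemma one_sub_Phi (x : ℝ) : 1 - Phi x = Kg * ∫ t in Ioi x, gpdf t := by
  have h2 : Kg * (∫ t in Iic x, gpdf t) + Kg * (∫ t in Ioi x, gpdf t) = 1 := by
    rw [← mul_add, Iic_add_Ioi_gpdf, Kg_total]
  rw [Phi_eq]; linarith

lemma Phi_diff {u v : ℝ} (h : u ≤ v) :
    Phi v - Phi u = Kg * ∫ t in Ioc u v, gpdf t := by
  rw [Phi_eq, Phi_eq, ← Iic_add_Ioc_gpdf h]; ring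

lemma log_div_sq_zero {f : ℝ → ℝ} (h : Tendsto f atTop (𝓝 1)) :
    Tendsto (fun s => Real.log (f s) / s ^ 2) atTop (𝓝 0) := by
  have h2 := (Real.continuousAt_log one_ne_zero).tendsto.comp h
  rw [Real.log_one] at h2
  exact Tendsto.div_atTop h2 sq_atTop

lemma combine_logit {F : ℝ → ℝ} {Λ L1 L2 : ℝ} (hΛ : 0 < Λ)
    (h1 : Tendsto (fun s => Real.log (F s) / s ^ 2) atTop (𝓝 L1))
    (h2 : Tendsto (fun s => Real.log (1 - F s) / s ^ 2) atTop (𝓝 L2)) :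
    Tendsto (fun s => logit (F s) / (Λ * s ^ 2)) atTop (𝓝 ((L1 - L2) / Λ)) := by
  have h3 := (h1.sub h2).div_const Λ
  apply h3.congr'
  filter_upwards [eventually_gt_atTop 0] with s hs
  unfold logit
  rw [← sub_div, div_div, mul_comm (s ^ 2) Λ]


theorem logit_proxy_over_c_limit
    (δL δU δ Λ z : ℝ) (hLU : δL < δU) (hneL : δ ≠ δL) (hneU : δ ≠ δU) (hΛ : 0 < Λ) :
    Tendsto
      (fun c : ℝ => logit
        (Phi (Real.sqrt (c / Λ) * (δU - δ) - z) - Phi (Real.sqrt (c / Λ) * (δL - δ) - z)) / c)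
      atTop
      (nhds ((1 / 2 - (if δ ∈ Set.Ioo δL δU then (0 : ℝ) else 1)) *
        min ((δU - δ) ^ 2 / Λ) ((δL - δ) ^ 2 / Λ))) := by
  set a := δU - δ with ha_def
  set b := δL - δ with hb_def
  have hba : b < a := sub_lt_sub_right hLU δ
  have ha0 : a ≠ 0 := sub_ne_zero.mpr (Ne.symm hneU)
  have hb0 : b ≠ 0 := sub_ne_zero.mpr (Ne.symm hneL)
  set T := (1 / 2 - (if δ ∈ Set.Ioo δL δU then (0 : ℝ) else 1)) *
      min (a ^ 2 / Λ) (b ^ 2 / Λ) with hT_def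
  -- reduce to s-variable
  suffices hg : Tendsto
      (fun s : ℝ => logit (Phi (a * s - z) - Phi (b * s - z)) / (Λ * s ^ 2)) atTop (𝓝 T) by
    have hsqrt : Tendsto Real.sqrt atTop atTop := by
      apply tendsto_atTop_atTop.mpr
      intro q
      refine ⟨q ^ 2, fun x hx => le_trans (le_abs_self q) ?_⟩
      rw [← Real.sqrt_sq_eq_abs]
      exact Real.sqrt_le_sqrt hx
    have hsq : Tendsto (fun c : ℝ => Real.sqrt (c / Λ)) atTop atTop :=
      hsqrt.comp (Tendsto.atTop_div_const hΛ tendsto_id)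
    have h := hg.comp hsq
    apply h.congr'
    filter_upwards [eventually_gt_atTop 0] with c hc
    have hsqq : Real.sqrt (c / Λ) ^ 2 = c / Λ := Real.sq_sqrt (by positivity)
    show logit (Phi (a * Real.sqrt (c / Λ) - z) - Phi (b * Real.sqrt (c / Λ) - z)) /
        (Λ * Real.sqrt (c / Λ) ^ 2) = _
    rw [hsqq, mul_div_cancel₀ _ hΛ.ne', mul_comm a, mul_comm b]
  -- now the s-variable limit, by cases on signs of a and b
  set F := fun s : ℝ => Phi (a * s - z) - Phi (b * s - z) with hF_def
  rcases lt_or_gt_of_ne ha0 with haneg | hapos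
  · -- left: b < a < 0
    have hbneg : b < 0 := hba.trans haneg
    have hnotin : δ ∉ Set.Ioo δL δU := by
      intro hmem
      have := hmem.2
      simp only [ha_def] at haneg
      linarith
    have h1 : Tendsto (fun s => Real.log (F s) / s ^ 2) atTop (𝓝 (-a ^ 2 / 2)) := by
      have hmid := tendsto_log_mid_neg (a := a) (b := b) z Kg haneg hba Kg_pos
      apply hmid.congr'
      filter_upwards [eventually_ge_atTop 0] with s hs
      have hle : b * s - z ≤ a * s - z := by nlinarith
      show _ = Real.log (Phi (a * s - z) - Phi (b * s - z)) / s ^ 2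
      rw [Phi_diff hle]
    have h2 : Tendsto (fun s => Real.log (1 - F s) / s ^ 2) atTop (𝓝 0) := by
      apply log_div_sq_zero
      have hten : Tendsto (fun s => Kg * (∫ t in Iic (b * s - z), gpdf t)
          + Kg * (Real.sqrt (2 * Real.pi) - ∫ t in Iic (a * s - z), gpdf t)) atTop
          (𝓝 (Kg * 0 + Kg * (Real.sqrt (2 * Real.pi) - 0))) := by
        exact ((tendsto_tailIic_zero z hbneg).const_mul Kg).add
          (((tendsto_const_nhds.sub (tendsto_tailIic_zero z haneg)).const_mul Kg))
      rw [mul_zero, zero_add, sub_zero, Kg_total] at hten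
      apply hten.congr
      intro s
      have e1 := one_sub_Phi (a * s - z)
      have e2 := Phi_eq (b * s - z)
      have e3 := Iic_add_Ioi_gpdf (a * s - z)
      show _ = 1 - (Phi (a * s - z) - Phi (b * s - z))
      have e4 : Kg * (∫ t in Ioi (a * s - z), gpdf t)
          = Kg * (Real.sqrt (2 * Real.pi) - ∫ t in Iic (a * s - z), gpdf t) := by
        rw [← e3]; ring
      linarith [e4]
    have hcomb := combine_logit hΛ h1 h2
    have hTval : T = (-a ^ 2 / 2 - 0) / Λ := by
      rw [hT_def, if_neg hnotin]
      have hmin : min (a ^ 2 / Λ) (b ^ 2 / Λ) = a ^ 2 / Λ := by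
        exact min_eq_left ((div_le_div_iff_of_pos_right hΛ).mpr (by nlinarith))
      rw [hmin]; ring
    rw [hTval]
    exact hcomb
  · rcases lt_or_gt_of_ne hb0 with hbneg | hbpos
    · -- interior: b < 0 < a
      have hin : δ ∈ Set.Ioo δL δU := by
        constructor
        · simp only [hb_def] at hbneg; linarith
        · simp only [ha_def] at hapos; linarith
      have hf1 : Tendsto F atTop (𝓝 1) := by
        have hten : Tendsto (fun s => 1 - Kg * (∫ t in Ioi (a * s - z), gpdf t)
            - Kg * (∫ t in Iic (b * s - z), gpdf t)) atTop (𝓝 (1 - Kg * 0 - Kg * 0)) :=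
          (tendsto_const_nhds.sub ((tendsto_tailIoi_zero z hapos).const_mul Kg)).sub
            ((tendsto_tailIic_zero z hbneg).const_mul Kg)
        rw [mul_zero, sub_zero, sub_zero] at hten
        apply hten.congr
        intro s
        have e1 := one_sub_Phi (a * s - z)
        have e2 := Phi_eq (b * s - z)
        show _ = Phi (a * s - z) - Phi (b * s - z)
        linarith
      have h1 : Tendsto (fun s => Real.log (F s) / s ^ 2) atTop (𝓝 0) :=
        log_div_sq_zero hf1
      have h2 : Tendsto (fun s => Real.log (1 - F s) / s ^ 2) atTop
          (𝓝 (-(min (a ^ 2) (b ^ 2)) / 2)) := by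
        have htt := tendsto_log_two_tails (a := a) (b := b) z Kg hapos hbneg Kg_pos
        apply htt.congr
        intro s
        show Real.log (Kg * ((∫ t in Iic (b * s - z), gpdf t) + ∫ t in Ioi (a * s - z), gpdf t))
            / s ^ 2 = Real.log (1 - (Phi (a * s - z) - Phi (b * s - z))) / s ^ 2
        have e1 := one_sub_Phi (a * s - z)
        have e2 := Phi_eq (b * s - z)
        have h5 : 1 - (Phi (a * s - z) - Phi (b * s - z))
            = Kg * ((∫ t in Iic (b * s - z), gpdf t) + ∫ t in Ioi (a * s - z), gpdf t) := by
          rw [mul_add]; linarith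
        rw [h5]
      have hcomb := combine_logit hΛ h1 h2
      have hTval : T = (0 - -(min (a ^ 2) (b ^ 2)) / 2) / Λ := by
        rw [hT_def, if_pos hin, min_div_div_right hΛ.le]
        ring
      rw [hTval]
      exact hcomb
    · -- right: 0 < b < a
      have hnotin : δ ∉ Set.Ioo δL δU := by
        intro hmem
        have := hmem.1
        simp only [hb_def] at hbpos
        linarith
      have h1 : Tendsto (fun s => Real.log (F s) / s ^ 2) atTop (𝓝 (-b ^ 2 / 2)) := by
        have hmid := tendsto_log_mid_pos (a := a) (b := b) z Kg hbpos hba Kg_pos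
        apply hmid.congr'
        filter_upwards [eventually_ge_atTop 0] with s hs
        have hle : b * s - z ≤ a * s - z := by nlinarith
        show _ = Real.log (Phi (a * s - z) - Phi (b * s - z)) / s ^ 2
        rw [Phi_diff hle]
      have h2 : Tendsto (fun s => Real.log (1 - F s) / s ^ 2) atTop (𝓝 0) := by
        apply log_div_sq_zero
        have hten : Tendsto (fun s => Kg * (Real.sqrt (2 * Real.pi)
            - ∫ t in Ioi (b * s - z), gpdf t)
            + Kg * (∫ t in Ioi (a * s - z), gpdf t)) atTop
            (𝓝 (Kg * (Real.sqrt (2 * Real.pi) - 0) + Kg * 0)) :=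
          (((tendsto_const_nhds.sub (tendsto_tailIoi_zero z hbpos)).const_mul Kg)).add
            ((tendsto_tailIoi_zero z hapos).const_mul Kg)
        rw [mul_zero, add_zero, sub_zero, Kg_total] at hten
        apply hten.congr
        intro s
        have e1 := one_sub_Phi (a * s - z)
        have e2 := Phi_eq (b * s - z)
        have e3 := Iic_add_Ioi_gpdf (b * s - z)
        show _ = 1 - (Phi (a * s - z) - Phi (b * s - z))
        have e4 : Kg * (∫ t in Iic (b * s - z), gpdf t)
            = Kg * (Real.sqrt (2 * Real.pi) - ∫ t in Ioi (b * s - z), gpdf t) := by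
          rw [← e3]; ring
        linarith [e4]
      have hcomb := combine_logit hΛ h1 h2
      have hTval : T = (-b ^ 2 / 2 - 0) / Λ := by
        rw [hT_def, if_neg hnotin]
        have hmin : min (a ^ 2 / Λ) (b ^ 2 / Λ) = b ^ 2 / Λ := by
          exact min_eq_right ((div_le_div_iff_of_pos_right hΛ).mpr (by nlinarith))
        rw [hmin]; ring
      rw [hTval]
      exact hcomb
end
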